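/- Let (X, μ) be a standard probability space and let V = (V_t)_{t∈ℝ} be a continuous representation of ℝ by Markov operators on L²(X, μ) (so V_0 = Id, V_{t+u} = V_t∘V_u, and t ↦ ⟨V_t f, g⟩ is continuous for all f, g ∈ L²(X, μ)). Suppose there exists s ∈ ℝ with s ∉ {−1, 0, 1} and a unitary operator U on L²(X, μ) such that U∘V_{st} = V_t∘U for all t ∈ ℝ, and suppose that a·∫_ℝ V_t dP(t) + (1−a)·J belongs to the weak operator topology closure of {V_t : t ∈ ℝ} for some Borel probability measure P on ℝ, some 0 < a ≤ 1, and some Markov operator J on L²(X, μ). Then a·Id + (1−a)·K belongs to the weak operator topology closure of {V_t : t ∈ ℝ} for some contraction K on L²(X, μ). -/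

import Mathlib

/-!
Let `Y` be `W` or `W⁻¹`, chosen so that `Y V_t Y⁻¹ = V_{ct}` with `|c| < 1`. Conjugation by `Y`
is continuous for the weak operator topology and preserves `{V_t}`, so the conjugates `Φ_n` of `Φ`
by `Yⁿ` stay in the WOT closure of `{V_t}`, and `Φ_n = a ∫ V_{cⁿt} dP(t) + (1 - a) J_n` with
`J_n` the conjugate of `J`. Markov operators are contractions (by Kadison's inequality
`(Vf)² ≤ V(f²)`), so by dominated convergence the integral tends weakly to `a • id`. Closed balls
being WOT-compact, `J_n` converges to a contraction `K` along an ultrafilter, and then `Φ_n`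
converges to `a • id + (1 - a) • K`.
-/

open MeasureTheory Filter
open scoped ENNReal RealInnerProductSpace symmDiff

/-- The constant function `1` as an element of `L²(μ)`. -/
noncomputable def lpOne {X : Type*} [MeasurableSpace X] (μ : Measure X)
    [IsProbabilityMeasure μ] : Lp ℝ 2 μ := Lp.const 2 μ (1 : ℝ)

/-- A Markov operator on `L²(μ)`: a bounded operator `V` with `V f ≥ 0` whenever
`f ≥ 0`, `V 1 = 1` and `V* 1 = 1`. -/
def IsMarkovOp {X : Type*} [MeasurableSpace X] (μ : Measure X) [IsProbabilityMeasure μ]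
    (V : Lp ℝ 2 μ →L[ℝ] Lp ℝ 2 μ) : Prop :=
  (∀ f : Lp ℝ 2 μ, 0 ≤ f → 0 ≤ V f) ∧
  V (lpOne μ) = lpOne μ ∧
  ContinuousLinearMap.adjoint V (lpOne μ) = lpOne μ

/-- `Φ` belongs to the closure of `S` in the weak operator topology on
bounded operators of `L²(μ)`. -/
def InWOTClosure {X : Type*} [MeasurableSpace X] (μ : Measure X)
    (S : Set (Lp ℝ 2 μ →L[ℝ] Lp ℝ 2 μ)) (Φ : Lp ℝ 2 μ →L[ℝ] Lp ℝ 2 μ) : Prop :=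
  (ContinuousLinearMapWOT.ofCLM Φ : Lp ℝ 2 μ →WOT[ℝ] Lp ℝ 2 μ) ∈
    closure ((ContinuousLinearMapWOT.ofCLM : (Lp ℝ 2 μ →L[ℝ] Lp ℝ 2 μ) → (Lp ℝ 2 μ →WOT[ℝ] Lp ℝ 2 μ)) '' S)

/-- The flow `{T_t}` is partially rigid along the sequence `{t_n}` with rigidity
constant `u`: `liminf_n μ(A ∩ T_{-t_n} A) ≥ u · μ(A)` for every measurable `A`. -/
def PartiallyRigidAlongWith {X : Type*} [MeasurableSpace X] (μ : Measure X)
    (T : ℝ → X → X) (t : ℕ → ℝ) (u : ℝ) : Prop :=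
  ∀ A : Set X, MeasurableSet A →
    ENNReal.ofReal u * μ A ≤ Filter.liminf (fun n => μ (A ∩ T (t n) ⁻¹' A)) Filter.atTop

/-- The flow `{T_t}` is partially rigid along the sequence `{t_n}`. -/
def PartiallyRigidAlong {X : Type*} [MeasurableSpace X] (μ : Measure X)
    (T : ℝ → X → X) (t : ℕ → ℝ) : Prop :=
  ∃ u : ℝ, 0 < u ∧ u ≤ 1 ∧ PartiallyRigidAlongWith μ T t u

open Topology

theorem sq_le_of_forall_rat_sub_mul_add_sq_nonneg {A B : ℝ}
    (h : ∀ q : ℚ, 0 ≤ A - 2 * q * B + (q : ℝ) ^ 2) : B ^ 2 ≤ A := by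
  have hB : 0 ≤ A - 2 * B * B + B ^ 2 :=
    Rat.denseRange_cast.induction_on (p := fun y : ℝ => 0 ≤ A - 2 * y * B + y ^ 2) B
      (isClosed_le continuous_const (by fun_prop)) h
  nlinarith

section Markov

variable {X : Type*} [MeasurableSpace X] {μ : Measure X}

theorem MeasureTheory.Lp.norm_sq_eq_integral_sq (f : Lp ℝ 2 μ) : ‖f‖ ^ 2 = ∫ x, f x ^ 2 ∂μ := by
  rw [← real_inner_self_eq_norm_sq, L2.inner_def]
  simp [sq]

variable [IsProbabilityMeasure μ]

theorem coeFn_lpOne : (lpOne μ : X → ℝ) =ᵐ[μ] fun _ => 1 := Lp.coeFn_const 2 μ (1 : ℝ)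

theorem inner_lpOne (f : Lp ℝ 2 μ) : ⟪f, lpOne μ⟫ = ∫ x, f x ∂μ := by
  rw [L2.inner_def]
  refine integral_congr_ae ?_
  filter_upwards [coeFn_lpOne (μ := μ)] with x hx
  simp [hx]

theorem coeFn_sub_smul_add_smul_lpOne (f g : Lp ℝ 2 μ) (q : ℝ) :
    ⇑(g - (2 * q) • f + (q ^ 2) • lpOne μ) =ᵐ[μ] fun x => g x - 2 * q * f x + q ^ 2 := by
  filter_upwards [Lp.coeFn_add (g - (2 * q) • f) ((q ^ 2) • lpOne μ), Lp.coeFn_sub g ((2 * q) • f),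
    Lp.coeFn_smul (2 * q) f, Lp.coeFn_smul (q ^ 2) (lpOne μ), coeFn_lpOne] with x h1 h2 h3 h4 h5
  simp only [h1, Pi.add_apply, h2, Pi.sub_apply, h3, h4, h5, Pi.smul_apply, smul_eq_mul, mul_one]

/-- Kadison's inequality: positivity of `V` applied to `(f - q)²` for every rational `q`. -/
theorem IsMarkovOp.ae_sq_apply_le {V : Lp ℝ 2 μ →L[ℝ] Lp ℝ 2 μ} (hV : IsMarkovOp μ V)
    {f g : Lp ℝ 2 μ} (hg : g =ᵐ[μ] fun x => f x ^ 2) : ∀ᵐ x ∂μ, V f x ^ 2 ≤ V g x := by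
  have hV_nonneg (q : ℚ) : ∀ᵐ x ∂μ, 0 ≤ V g x - 2 * q * V f x + (q : ℝ) ^ 2 := by
    have hsq_nonneg : 0 ≤ g - (2 * q : ℝ) • f + ((q : ℝ) ^ 2) • lpOne μ := by
      rw [← Lp.coeFn_nonneg]
      filter_upwards [coeFn_sub_smul_add_smul_lpOne f g q, hg] with x hx hgx
      rw [Pi.zero_apply, hx, hgx]
      nlinarith [sq_nonneg (f x - q)]
    have hVsq_nonneg := hV.1 _ hsq_nonneg
    rw [map_add, map_sub, map_smul, map_smul, hV.2.1] at hVsq_nonneg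
    filter_upwards [(Lp.coeFn_nonneg _).mpr hVsq_nonneg,
      coeFn_sub_smul_add_smul_lpOne (V f) (V g) q] with x h hx
    rwa [Pi.zero_apply, hx] at h
  filter_upwards [ae_all_iff.mpr hV_nonneg] with x hx
  exact sq_le_of_forall_rat_sub_mul_add_sq_nonneg hx

theorem IsMarkovOp.norm_apply_le_of_ae_eq_sq {V : Lp ℝ 2 μ →L[ℝ] Lp ℝ 2 μ} (hV : IsMarkovOp μ V)
    {f g : Lp ℝ 2 μ} (hg : g =ᵐ[μ] fun x => f x ^ 2) : ‖V f‖ ≤ ‖f‖ := by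
  have hVf_int : Integrable (fun x => V f x ^ 2) μ := (Lp.memLp (V f)).integrable_sq
  have hVg_int : Integrable (V g) μ := (Lp.memLp (V g)).integrable one_le_two
  refine pow_le_pow_iff_left₀ (norm_nonneg _) (norm_nonneg _) two_ne_zero |>.mp ?_
  calc ‖V f‖ ^ 2 = ∫ x, V f x ^ 2 ∂μ := Lp.norm_sq_eq_integral_sq _
    _ ≤ ∫ x, V g x ∂μ := integral_mono_ae hVf_int hVg_int (hV.ae_sq_apply_le hg)
    _ = ⟪g, lpOne μ⟫ := by
      rw [← inner_lpOne, ← ContinuousLinearMap.adjoint_inner_right, hV.2.2]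
    _ = ‖f‖ ^ 2 := by rw [inner_lpOne, Lp.norm_sq_eq_integral_sq, integral_congr_ae hg]

theorem IsMarkovOp.norm_le_one {V : Lp ℝ 2 μ →L[ℝ] Lp ℝ 2 μ} (hV : IsMarkovOp μ V) :
    ‖V‖ ≤ 1 := by
  refine V.opNorm_le_bound zero_le_one fun f => ?_
  rw [one_mul]
  refine (Lp.simpleFunc.denseRange (by norm_num : (2 : ℝ≥0∞) ≠ ∞)).induction_on f
    (isClosed_le (V.continuous.norm) continuous_norm) fun φ => ?_
  obtain ⟨C, hC⟩ := (Lp.simpleFunc.toSimpleFunc φ).exists_forall_norm_le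
  have hφ := Lp.simpleFunc.toSimpleFunc_eq_toFun φ
  have hsq : MemLp (fun x => (φ : Lp ℝ 2 μ) x ^ 2) 2 μ := by
    refine MemLp.of_bound ((Lp.aestronglyMeasurable _).pow 2) (C ^ 2) ?_
    filter_upwards [hφ] with x hx
    rw [norm_pow, ← hx]
    exact pow_le_pow_left₀ (norm_nonneg _) (hC x) 2
  exact hV.norm_apply_le_of_ae_eq_sq hsq.coeFn_toLp

end Markov

namespace ContinuousLinearMapWOT

variable {E : Type*} [NormedAddCommGroup E] [InnerProductSpace ℝ E]

theorem exists_tendsto_inner_apply_of_le_principal_closedBall {r : ℝ}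
    (𝒰 : Ultrafilter (E →WOT[ℝ] E))
    (h𝒰 : ↑𝒰 ≤ 𝓟 (ofCLM '' Metric.closedBall (0 : E →L[ℝ] E) r)) (x y : E) :
    ∃ k, Tendsto (fun A : E →WOT[ℝ] E => ⟪y, A x⟫) 𝒰 (𝓝 k) ∧ |k| ≤ r * ‖x‖ * ‖y‖ := by
  have hbound : ∀ᶠ A : E →WOT[ℝ] E in 𝒰,
      ⟪y, A x⟫ ∈ Set.Icc (-(r * ‖x‖ * ‖y‖)) (r * ‖x‖ * ‖y‖) := by
    filter_upwards [le_principal_iff.mp h𝒰]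
    rintro _ ⟨A, hA, rfl⟩
    rw [Set.mem_Icc, ← abs_le, real_inner_comm]
    calc |⟪A x, y⟫| ≤ ‖A x‖ * ‖y‖ := abs_real_inner_le_norm _ _
      _ ≤ r * ‖x‖ * ‖y‖ := by
        gcongr
        exact A.le_of_opNorm_le (mem_closedBall_zero_iff.mp hA) x
  obtain ⟨k, hk, hlim⟩ := isCompact_Icc.ultrafilter_le_nhds (𝒰.map fun A => ⟪y, A x⟫)
    (by rw [Ultrafilter.coe_map]; exact le_principal_iff.mpr hbound)
  exact ⟨k, hlim, abs_le.mpr hk⟩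

variable [CompleteSpace E]

theorem isCompact_image_ofCLM_closedBall (r : ℝ) :
    IsCompact (ofCLM '' Metric.closedBall (0 : E →L[ℝ] E) r) := by
  refine isCompact_iff_ultrafilter_le_nhds.mpr fun 𝒰 h𝒰 => ?_
  obtain ⟨_, ⟨A, hA, -⟩⟩ := 𝒰.nonempty_of_mem (le_principal_iff.mp h𝒰)
  have hr : 0 ≤ r := (norm_nonneg A).trans (mem_closedBall_zero_iff.mp hA)
  choose k hk hkr using exists_tendsto_inner_apply_of_le_principal_closedBall 𝒰 h𝒰
  let B : E →ₗ[ℝ] E →ₗ[ℝ] ℝ := LinearMap.mk₂ ℝ k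
    (fun x x' y => tendsto_nhds_unique (hk (x + x') y)
      (by simpa only [map_add, inner_add_right] using (hk x y).add (hk x' y)))
    (fun c x y => tendsto_nhds_unique (hk (c • x) y)
      (by simpa only [map_smul, real_inner_smul_right, smul_eq_mul] using (hk x y).const_mul c))
    (fun x y y' => tendsto_nhds_unique (hk x (y + y'))
      (by simpa only [inner_add_left] using (hk x y).add (hk x y')))
    (fun c x y => tendsto_nhds_unique (hk x (c • y))
      (by simpa only [real_inner_smul_left, smul_eq_mul] using (hk x y).const_mul c))
  let B' := B.mkContinuous₂ r fun x y => hkr x y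
  refine ⟨ofCLM (InnerProductSpace.continuousLinearMapOfBilin B'), ⟨_, ?_, rfl⟩,
    le_nhds_iff_forall_inner_apply_le_nhds.mpr fun x y => ?_⟩
  · refine mem_closedBall_zero_iff.mpr <| ContinuousLinearMap.opNorm_le_bound _ hr fun x => ?_
    calc ‖InnerProductSpace.continuousLinearMapOfBilin B' x‖ = ‖B' x‖ :=
          (InnerProductSpace.toDual ℝ E).symm.norm_map (B' x)
      _ ≤ ‖B'‖ * ‖x‖ := B'.le_opNorm x
      _ ≤ r * ‖x‖ := by gcongr; exact LinearMap.mkContinuous₂_norm_le _ hr _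
  · rw [ofCLM_apply, real_inner_comm, InnerProductSpace.continuousLinearMapOfBilin_apply]
    exact hk x y

section Conj

variable {𝕜 E : Type*} [NormedField 𝕜] [AddCommGroup E] [TopologicalSpace E] [Module 𝕜 E]
  [IsTopologicalAddGroup E] [ContinuousConstSMul 𝕜 E]

theorem continuous_conj (e : E ≃L[𝕜] E) :
    Continuous fun A : E →WOT[𝕜] E => ofCLM (e.conjContinuousAlgEquiv (toCLM A)) :=
  (continuous_postcomp (ofCLM (e : E →L[𝕜] E))).comp
    (continuous_precomp (ofCLM (e.symm : E →L[𝕜] E)))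

theorem ofCLM_conj_mem_closure (e : E ≃L[𝕜] E) {S : Set (E →L[𝕜] E)}
    (hS : Set.MapsTo e.conjContinuousAlgEquiv S S) {A : E →L[𝕜] E}
    (hA : ofCLM A ∈ closure (ofCLM '' S)) :
    ofCLM (e.conjContinuousAlgEquiv A) ∈ closure (ofCLM '' S) :=
  map_mem_closure (f := fun B : E →WOT[𝕜] E => ofCLM (e.conjContinuousAlgEquiv (toCLM B)))
    (continuous_conj e) hA (by
    rintro _ ⟨B, hB, rfl⟩
    exact ⟨_, hS hB, rfl⟩)

end Conj

end ContinuousLinearMapWOT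

section Rescaling

variable {E : Type*} [NormedAddCommGroup E] [InnerProductSpace ℝ E]

theorem LinearIsometryEquiv.inner_conj_apply (Y : E ≃ₗᵢ[ℝ] E) (A : E →L[ℝ] E) (f g : E) :
    ⟪Y.toContinuousLinearEquiv.conjContinuousAlgEquiv A f, g⟫ = ⟪A (Y.symm f), Y.symm g⟫ :=
  Y.inner_map_eq_flip _ _

theorem LinearIsometryEquiv.norm_conj_le (Y : E ≃ₗᵢ[ℝ] E) (A : E →L[ℝ] E) :
    ‖Y.toContinuousLinearEquiv.conjContinuousAlgEquiv A‖ ≤ ‖A‖ :=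
  ContinuousLinearMap.opNorm_le_bound _ (norm_nonneg A) fun f => by
    calc ‖Y (A (Y.symm f))‖ = ‖A (Y.symm f)‖ := Y.norm_map _
      _ ≤ ‖A‖ * ‖Y.symm f‖ := A.le_opNorm _
      _ = ‖A‖ * ‖f‖ := by rw [Y.symm.norm_map]

theorem exists_conj_apply_eq_mul_abs_lt_one {V : ℝ → E →L[ℝ] E} {s : ℝ} (hs0 : s ≠ 0)
    (hs1 : s ≠ 1) (hsm1 : s ≠ -1) (W : E ≃ₗᵢ[ℝ] E) (hW : ∀ t f, W (V (s * t) f) = V t (W f)) :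
    ∃ (Y : E ≃ₗᵢ[ℝ] E) (c : ℝ), |c| < 1 ∧
      ∀ t, Y.toContinuousLinearEquiv.conjContinuousAlgEquiv (V t) = V (c * t) := by
  rcases lt_or_gt_of_ne (show |s| ≠ 1 by simp [abs_eq zero_le_one, hs1, hsm1]) with hs | hs
  · refine ⟨W.symm, s, hs, fun t => ContinuousLinearMap.ext fun f => ?_⟩
    simp [← hW]
  · refine ⟨W, s⁻¹, by rwa [abs_inv, inv_lt_one₀ (abs_pos.mpr hs0)],
      fun t => ContinuousLinearMap.ext fun f => ?_⟩
    simpa [hs0] using hW (s⁻¹ * t) (W.symm f)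

/-- `Φ = a ∫ V_t dP(t) + (1 - a) J`, the integral being taken in the weak sense. -/
def IsWeakMixture (a : ℝ) (P : Measure ℝ) (V : ℝ → E →L[ℝ] E) (J Φ : E →L[ℝ] E) : Prop :=
  ∀ f g, ⟪Φ f, g⟫ = a * ∫ t, ⟪V t f, g⟫ ∂P + (1 - a) * ⟪J f, g⟫

theorem IsWeakMixture.conj {a : ℝ} {P : Measure ℝ} {V : ℝ → E →L[ℝ] E} {J Φ : E →L[ℝ] E}
    (h : IsWeakMixture a P V J Φ) (Y : E ≃ₗᵢ[ℝ] E) :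
    IsWeakMixture a P (fun t => Y.toContinuousLinearEquiv.conjContinuousAlgEquiv (V t))
      (Y.toContinuousLinearEquiv.conjContinuousAlgEquiv J)
      (Y.toContinuousLinearEquiv.conjContinuousAlgEquiv Φ) := by
  intro f g
  simp only [Y.inner_conj_apply]
  exact h _ _

theorem IsWeakMixture.iterate_conj {a : ℝ} {P : Measure ℝ} {V : ℝ → E →L[ℝ] E}
    {J Φ : E →L[ℝ] E} (h : IsWeakMixture a P V J Φ) (Y : E ≃ₗᵢ[ℝ] E) (n : ℕ) :
    IsWeakMixture a P (fun t => (Y.toContinuousLinearEquiv.conjContinuousAlgEquiv)^[n] (V t))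
      ((Y.toContinuousLinearEquiv.conjContinuousAlgEquiv)^[n] J)
      ((Y.toContinuousLinearEquiv.conjContinuousAlgEquiv)^[n] Φ) := by
  induction n with
  | zero => exact h
  | succ n ih =>
    simp only [Function.iterate_succ_apply']
    exact ih.conj Y

theorem tendsto_integral_inner_apply_mul {V : ℝ → E →L[ℝ] E} {C : ℝ} (hV : ∀ t, ‖V t‖ ≤ C)
    (hVcont : ∀ f g, Continuous fun t => ⟪V t f, g⟫) (P : Measure ℝ) [IsProbabilityMeasure P]
    {ι : Type*} {l : Filter ι} [l.IsCountablyGenerated] {r : ι → ℝ} (hr : Tendsto r l (𝓝 0))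
    (f g : E) : Tendsto (fun i => ∫ t, ⟪V (r i * t) f, g⟫ ∂P) l (𝓝 ⟪V 0 f, g⟫) := by
  have hlim : ∀ t, Tendsto (fun i => ⟪V (r i * t) f, g⟫) l (𝓝 ⟪V 0 f, g⟫) := fun t => by
    have hrt := hr.mul_const t
    rw [zero_mul] at hrt
    exact ((hVcont f g).tendsto 0).comp hrt
  simpa using tendsto_integral_filter_of_dominated_convergence (μ := P) (fun _ => C * ‖f‖ * ‖g‖)
    (Eventually.of_forall fun i =>
      ((hVcont f g).comp (continuous_const.mul continuous_id)).aestronglyMeasurable)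
    (Eventually.of_forall fun i => Eventually.of_forall fun t => by
      rw [Real.norm_eq_abs]
      calc |⟪V (r i * t) f, g⟫| ≤ ‖V (r i * t) f‖ * ‖g‖ := abs_real_inner_le_norm _ _
        _ ≤ C * ‖f‖ * ‖g‖ := by gcongr; exact (V _).le_of_opNorm_le (hV _) f)
    (integrable_const _) (Eventually.of_forall hlim)

variable [CompleteSpace E]

theorem IsWeakMixture.tendsto_ofCLM {a : ℝ} {P : Measure ℝ} {ι : Type*} {l : Filter ι}
    {U : ι → ℝ → E →L[ℝ] E} {J Φ : ι → E →L[ℝ] E} {K : E →L[ℝ] E}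
    (hΦ : ∀ i, IsWeakMixture a P (U i) (J i) (Φ i))
    (hU : ∀ f g, Tendsto (fun i => ∫ t, ⟪U i t f, g⟫ ∂P) l (𝓝 ⟪f, g⟫))
    (hJ : Tendsto (fun i => ContinuousLinearMapWOT.ofCLM (J i)) l (𝓝 (.ofCLM K))) :
    Tendsto (fun i => ContinuousLinearMapWOT.ofCLM (Φ i)) l
      (𝓝 (.ofCLM (a • ContinuousLinearMap.id ℝ E + (1 - a) • K))) := by
  refine ContinuousLinearMapWOT.tendsto_iff_forall_inner_apply_tendsto.mpr fun f g => ?_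
  have hJfg := ContinuousLinearMapWOT.tendsto_iff_forall_inner_apply_tendsto.mp hJ f g
  simp only [ContinuousLinearMapWOT.ofCLM_apply, real_inner_comm _ g] at hJfg ⊢
  simp only [add_apply, smul_apply, ContinuousLinearMap.id_apply, inner_add_left,
    real_inner_smul_left]
  exact (((hU f g).const_mul a).add (hJfg.const_mul (1 - a))).congr fun i => (hΦ i f g).symm

end Rescaling

theorem stmt9_general {X : Type*} [MeasurableSpace X]
    (μ : Measure X) [IsProbabilityMeasure μ]
    (V : ℝ → (Lp ℝ 2 μ →L[ℝ] Lp ℝ 2 μ))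
    (hV0 : V 0 = ContinuousLinearMap.id ℝ (Lp ℝ 2 μ))
    (hVmarkov : ∀ t : ℝ, IsMarkovOp μ (V t))
    (hVcont : ∀ f g : Lp ℝ 2 μ, Continuous fun t : ℝ => ⟪V t f, g⟫)
    (s : ℝ) (hs0 : s ≠ 0) (hs1 : s ≠ 1) (hsm1 : s ≠ -1)
    (W : Lp ℝ 2 μ ≃ₗᵢ[ℝ] Lp ℝ 2 μ)
    (hW : ∀ (t : ℝ) (f : Lp ℝ 2 μ), W (V (s * t) f) = V t (W f))
    (P : Measure ℝ) [IsProbabilityMeasure P]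
    (a : ℝ)
    (J : Lp ℝ 2 μ →L[ℝ] Lp ℝ 2 μ) (hJ : IsMarkovOp μ J)
    (Φ : Lp ℝ 2 μ →L[ℝ] Lp ℝ 2 μ)
    (hΦ : ∀ f g : Lp ℝ 2 μ, ⟪Φ f, g⟫ = a * (∫ t, ⟪V t f, g⟫ ∂P) + (1 - a) * ⟪J f, g⟫)
    (hΦmem : InWOTClosure μ (Set.range V) Φ) :
    ∃ K : Lp ℝ 2 μ →L[ℝ] Lp ℝ 2 μ, ‖K‖ ≤ 1 ∧
      InWOTClosure μ (Set.range V)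
        (a • ContinuousLinearMap.id ℝ (Lp ℝ 2 μ) + (1 - a) • K) := by
  obtain ⟨Y, c, hc, hYV⟩ := exists_conj_apply_eq_mul_abs_lt_one hs0 hs1 hsm1 W hW
  set φ := Y.toContinuousLinearEquiv.conjContinuousAlgEquiv
  have hφV (n : ℕ) (t : ℝ) : φ^[n] (V t) = V (c ^ n * t) := by
    have hsemiconj : Function.Semiconj V (c * ·) φ := fun t => (hYV t).symm
    simpa [mul_left_iterate] using (hsemiconj.iterate_right n t).symm
  have hΦn (n : ℕ) : InWOTClosure μ (Set.range V) (φ^[n] Φ) := by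
    refine Set.MapsTo.iterate (s := {A | InWOTClosure μ (Set.range V) A})
      (fun A hA => ContinuousLinearMapWOT.ofCLM_conj_mem_closure _ ?_ hA) n hΦmem
    rintro _ ⟨t, rfl⟩
    exact ⟨c * t, (hYV t).symm⟩
  have hJn (n : ℕ) : φ^[n] J ∈ Metric.closedBall 0 1 :=
    Set.MapsTo.iterate (fun A hA => mem_closedBall_zero_iff.mpr <|
        (Y.norm_conj_le A).trans (mem_closedBall_zero_iff.mp hA)) n
      (mem_closedBall_zero_iff.mpr hJ.norm_le_one)
  let 𝒰 := Ultrafilter.of (atTop : Filter ℕ)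
  obtain ⟨_, ⟨K, hK, rfl⟩, hJK⟩ :=
    (ContinuousLinearMapWOT.isCompact_image_ofCLM_closedBall 1).ultrafilter_le_nhds
      (𝒰.map fun n => .ofCLM (φ^[n] J)) (by
        rw [Ultrafilter.coe_map]
        exact le_principal_iff.mpr (mem_map.mpr (Eventually.of_forall fun n => ⟨_, hJn n, rfl⟩)))
  have hint (f g) : Tendsto (fun n => ∫ t, ⟪φ^[n] (V t) f, g⟫ ∂P) 𝒰 (𝓝 ⟪f, g⟫) := by
    simpa [hφV, hV0] using (tendsto_integral_inner_apply_mul (fun t => (hVmarkov t).norm_le_one)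
      hVcont P (tendsto_pow_atTop_nhds_zero_of_abs_lt_one hc) f g).mono_left (Ultrafilter.of_le _)
  exact ⟨K, mem_closedBall_zero_iff.mp hK, isClosed_closure.mem_of_tendsto
    (IsWeakMixture.tendsto_ofCLM (IsWeakMixture.iterate_conj hΦ Y) hint hJK)
    (Eventually.of_forall hΦn)⟩

/-- Lemma 6.2: let `V = (V_t)` be a continuous representation of `ℝ` by
Markov operators on `L²(X, μ)`. If `V` is spectrally self-similar at scale
`s ∉ {-1, 0, 1}` (i.e. `U ∘ V_{st} = V_t ∘ U` for a unitary `U`) and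
`a ∫ V_t dP(t) + (1-a) J` belongs to the WOT closure of `{V_t : t ∈ ℝ}` for some
probability measure `P`, `0 < a ≤ 1` and Markov operator `J`, then `a·Id + (1-a)·K`
belongs to the WOT closure of `{V_t : t ∈ ℝ}` for some contraction `K`. -/
theorem stmt9 {X : Type*} [MeasurableSpace X] [StandardBorelSpace X]
    (μ : Measure X) [IsProbabilityMeasure μ]
    (V : ℝ → (Lp ℝ 2 μ →L[ℝ] Lp ℝ 2 μ))
    (hV0 : V 0 = ContinuousLinearMap.id ℝ (Lp ℝ 2 μ))
    (hVadd : ∀ t u : ℝ, V (t + u) = (V t).comp (V u))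
    (hVmarkov : ∀ t : ℝ, IsMarkovOp μ (V t))
    (hVcont : ∀ f g : Lp ℝ 2 μ, Continuous fun t : ℝ => ⟪V t f, g⟫)
    (s : ℝ) (hs0 : s ≠ 0) (hs1 : s ≠ 1) (hsm1 : s ≠ -1)
    (W : Lp ℝ 2 μ ≃ₗᵢ[ℝ] Lp ℝ 2 μ)
    (hW : ∀ (t : ℝ) (f : Lp ℝ 2 μ), W (V (s * t) f) = V t (W f))
    (P : Measure ℝ) [IsProbabilityMeasure P]
    (a : ℝ) (ha0 : 0 < a) (ha1 : a ≤ 1)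
    (J : Lp ℝ 2 μ →L[ℝ] Lp ℝ 2 μ) (hJ : IsMarkovOp μ J)
    (Φ : Lp ℝ 2 μ →L[ℝ] Lp ℝ 2 μ)
    (hΦ : ∀ f g : Lp ℝ 2 μ, ⟪Φ f, g⟫ = a * (∫ t, ⟪V t f, g⟫ ∂P) + (1 - a) * ⟪J f, g⟫)
    (hΦmem : InWOTClosure μ (Set.range V) Φ) :
    ∃ K : Lp ℝ 2 μ →L[ℝ] Lp ℝ 2 μ, ‖K‖ ≤ 1 ∧
      InWOTClosure μ (Set.range V)
        (a • ContinuousLinearMap.id ℝ (Lp ℝ 2 μ) + (1 - a) • K) :=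
  stmt9_general μ V hV0 hVmarkov hVcont s hs0 hs1 hsm1 W hW P a J hJ Φ hΦ hΦmem
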